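/- arXiv:2208.12956 — 3 statements merged into one kernel-verified Lean document; each statement's English description precedes it below -/
import Mathlib

section
/- Let n ≥ 2 and let ω_1, …, ω_n be the n-th roots of unity. For any ρ in the open sector Γ_κ = {ρ ∈ ℂ : π(κ−1)/n < arg ρ < πκ/n} (for a fixed κ ∈ {1,…,2n}), the real parts Re(ρω_k) are pairwise distinct; hence the roots of unity can be numbered so that Re(ρω_1) < Re(ρω_2) < ⋯ < Re(ρω_n) for all ρ in the sector, with the same numbering throughout the sector. -/
/-!
If `a ≠ b` are `n`-th roots of unity and `Re (ρ a) = Re (ρ b)`, then using `conj a = a⁻¹`,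
`conj b = b⁻¹` one finds `ρ a b = conj ρ`, so `ρ ^ n` is real. On the open sector `ρ ^ n` has
argument strictly between `π (κ - 1)` and `π κ`, so it is never real. Hence the real parts
`Re (ρ ω_k)` never collide on the sector, and since the sector is connected, the intermediate
value theorem forces their relative order to be the same at every point of it.
-/

open Complex ComplexConjugate

theorem Complex.re_mul_ne_re_mul_of_pow_eq_one {n : ℕ} (hn : n ≠ 0) {ρ a b : ℂ}
    (ha : a ^ n = 1) (hb : b ^ n = 1) (hab : a ≠ b) (hρ : (ρ ^ n).im ≠ 0) :
    (ρ * a).re ≠ (ρ * b).re := by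
  intro h
  have ha0 : a ≠ 0 := by rintro rfl; simp [zero_pow hn] at ha
  have hb0 : b ≠ 0 := by rintro rfl; simp [zero_pow hn] at hb
  have hconj_a : conj a = a⁻¹ := (inv_eq_conj (norm_eq_one_of_pow_eq_one ha hn)).symm
  have hconj_b : conj b = b⁻¹ := (inv_eq_conj (norm_eq_one_of_pow_eq_one hb hn)).symm
  have hsum : ρ * a + conj ρ * a⁻¹ = ρ * b + conj ρ * b⁻¹ := by
    calc ρ * a + conj ρ * a⁻¹ = ρ * a + conj (ρ * a) := by rw [map_mul, hconj_a]
      _ = ρ * b + conj (ρ * b) := by rw [add_conj, add_conj, h]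
      _ = ρ * b + conj ρ * b⁻¹ := by rw [map_mul, hconj_b]
  have hprod : ρ * (a * b) = conj ρ := by
    have hfactor : (ρ * (a * b) - conj ρ) * (a - b) = 0 := by
      linear_combination (a * b) * hsum - (conj ρ * b) * mul_inv_cancel₀ ha0
        + (conj ρ * a) * mul_inv_cancel₀ hb0
    exact sub_eq_zero.mp ((mul_eq_zero.mp hfactor).resolve_right (sub_ne_zero.mpr hab))
  have hreal : conj (ρ ^ n) = ρ ^ n := by
    rw [map_pow, ← hprod, mul_pow, mul_pow, ha, hb, mul_one, mul_one]
  exact hρ (conj_eq_iff_im.mp hreal)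

theorem IsPreconnected.lt_of_lt_of_forall_ne {X α : Type*} [TopologicalSpace X] [LinearOrder α]
    [TopologicalSpace α] [OrderClosedTopology α] {s : Set X} (hs : IsPreconnected s)
    {f g : X → α} (hf : ContinuousOn f s) (hg : ContinuousOn g s) (hne : ∀ x ∈ s, f x ≠ g x)
    {a b : X} (ha : a ∈ s) (hb : b ∈ s) (hab : f a < g a) : f b < g b := by
  by_contra! hba
  obtain ⟨x, hx, hfg⟩ := hs.intermediate_value₂ ha hb hf hg hab.le hba
  exact hne x hx hfg

theorem IsPreconnected.exists_perm_strictMono {X α : Type*} [TopologicalSpace X] [LinearOrder α]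
    [TopologicalSpace α] [OrderClosedTopology α] {n : ℕ} {s : Set X} (hs : IsPreconnected s)
    (g : Fin n → X → α) (hg : ∀ k, ContinuousOn (g k) s)
    (hinj : ∀ x ∈ s, Function.Injective (g · x)) :
    ∃ σ : Equiv.Perm (Fin n), ∀ x ∈ s, StrictMono (fun k => g (σ k) x) := by
  rcases s.eq_empty_or_nonempty with rfl | ⟨x₀, hx₀⟩
  · exact ⟨1, fun x hx => hx.elim⟩
  let σ := Tuple.sort (g · x₀)
  refine ⟨σ, fun x hx j k hjk => ?_⟩
  have hσ : σ j ≠ σ k := σ.injective.ne hjk.ne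
  have hbase : g (σ j) x₀ < g (σ k) x₀ :=
    (Tuple.monotone_sort (g · x₀) hjk.le).lt_of_ne ((hinj x₀ hx₀).ne hσ)
  exact hs.lt_of_lt_of_forall_ne (hg _) (hg _) (fun y hy => (hinj y hy).ne hσ) hx₀ hx hbase

def sector (n κ : ℕ) : Set ℂ :=
  {ρ | ∃ r θ : ℝ, 0 < r ∧ Real.pi * (κ - 1) / n < θ ∧ θ < Real.pi * κ / n ∧
    ρ = r * Complex.exp (θ * Complex.I)}

theorem isPreconnected_sector (n κ : ℕ) : IsPreconnected (sector n κ) := by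
  have himage : sector n κ = (fun p : ℝ × ℝ => (p.1 : ℂ) * exp (p.2 * I)) ''
      (Set.Ioi 0 ×ˢ Set.Ioo (Real.pi * (κ - 1) / n) (Real.pi * κ / n)) := by
    ext ρ
    constructor
    · rintro ⟨r, θ, hr, h₁, h₂, rfl⟩
      exact ⟨(r, θ), ⟨hr, h₁, h₂⟩, rfl⟩
    · rintro ⟨⟨r, θ⟩, ⟨hr, h₁, h₂⟩, rfl⟩
      exact ⟨r, θ, hr, h₁, h₂, rfl⟩
  rw [himage]
  exact (isPreconnected_Ioi.prod isPreconnected_Ioo).image _ (by fun_prop)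

theorem pow_im_ne_zero_of_mem_sector {n κ : ℕ} (hn : n ≠ 0) {ρ : ℂ} (hρ : ρ ∈ sector n κ) :
    (ρ ^ n).im ≠ 0 := by
  obtain ⟨r, θ, hr, h₁, h₂, rfl⟩ := hρ
  have hn' : (0 : ℝ) < n := by positivity
  have him : ((r * exp (θ * I)) ^ n).im = r ^ n * Real.sin (n * θ) := by
    rw [mul_pow, ← exp_nat_mul, ← ofReal_pow, im_ofReal_mul, ← mul_assoc, ← ofReal_natCast,
      ← ofReal_mul, exp_ofReal_mul_I_im]
  have hsin : Real.sin (n * θ) ≠ 0 := by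
    rw [Ne, Real.sin_eq_zero_iff]
    rintro ⟨m, hm⟩
    rw [div_lt_iff₀ hn', mul_comm θ, ← hm] at h₁
    rw [lt_div_iff₀ hn', mul_comm θ, ← hm] at h₂
    have hlow : (κ : ℝ) - 1 < m := lt_of_mul_lt_mul_left (by linarith) Real.pi_pos.le
    have hhigh : (m : ℝ) < κ := lt_of_mul_lt_mul_left (by linarith) Real.pi_pos.le
    have : (κ : ℤ) - 1 < m ∧ m < κ := ⟨by exact_mod_cast hlow, by exact_mod_cast hhigh⟩
    omega
  rw [him]
  exact mul_ne_zero (pow_pos hr n).ne' hsin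

theorem roots_of_unity_ordering_on_sector_general (n : ℕ)
    (ω : Fin n → ℂ) (hinj : Function.Injective ω) (hroot : ∀ k, (ω k) ^ n = 1)
    (κ : ℕ) :
    (∀ ρ : ℂ, (∃ r θ : ℝ, 0 < r ∧ Real.pi * (κ - 1) / n < θ ∧ θ < Real.pi * κ / n ∧
        ρ = r * Complex.exp (θ * Complex.I)) →
      ∀ j k : Fin n, j ≠ k → (ρ * ω j).re ≠ (ρ * ω k).re) ∧
    ∃ σ : Equiv.Perm (Fin n),
      ∀ ρ : ℂ, (∃ r θ : ℝ, 0 < r ∧ Real.pi * (κ - 1) / n < θ ∧ θ < Real.pi * κ / n ∧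
          ρ = r * Complex.exp (θ * Complex.I)) →
        ∀ j k : Fin n, j < k → (ρ * ω (σ j)).re < (ρ * ω (σ k)).re := by
  have hdistinct : ∀ ρ ∈ sector n κ, Function.Injective fun k => (ρ * ω k).re := by
    intro ρ hρ j k hjk
    by_contra hne
    have hn : n ≠ 0 := j.pos.ne'
    exact re_mul_ne_re_mul_of_pow_eq_one hn (hroot j) (hroot k) (hinj.ne hne)
      (pow_im_ne_zero_of_mem_sector hn hρ) hjk
  refine ⟨fun ρ hρ j k hjk => (hdistinct ρ hρ).ne hjk, ?_⟩
  obtain ⟨σ, hσ⟩ := (isPreconnected_sector n κ).exists_perm_strictMono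
    (fun k ρ => (ρ * ω k).re) (fun k => by fun_prop) hdistinct
  exact ⟨σ, fun ρ hρ j k hjk => hσ ρ hρ hjk⟩

/-- On the open sector `Γ_κ = {ρ = r e^{iθ} : r > 0, π(κ-1)/n < θ < πκ/n}`, the real
parts `Re(ρ ω_k)` of `ρ` times the `n`-th roots of unity are pairwise distinct; hence
the roots of unity admit a numbering (a permutation) such that
`Re(ρω_1) < Re(ρω_2) < ⋯ < Re(ρω_n)` holds simultaneously for all `ρ` in the sector. -/
theorem roots_of_unity_ordering_on_sector (n : ℕ) (hn : 2 ≤ n)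
    (ω : Fin n → ℂ) (hinj : Function.Injective ω) (hroot : ∀ k, (ω k) ^ n = 1)
    (κ : ℕ) (hκ1 : 1 ≤ κ) (hκ2 : κ ≤ 2 * n) :
    (∀ ρ : ℂ, (∃ r θ : ℝ, 0 < r ∧ Real.pi * (κ - 1) / n < θ ∧ θ < Real.pi * κ / n ∧
        ρ = r * Complex.exp (θ * Complex.I)) →
      ∀ j k : Fin n, j ≠ k → (ρ * ω j).re ≠ (ρ * ω k).re) ∧
    ∃ σ : Equiv.Perm (Fin n),
      ∀ ρ : ℂ, (∃ r θ : ℝ, 0 < r ∧ Real.pi * (κ - 1) / n < θ ∧ θ < Real.pi * κ / n ∧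
          ρ = r * Complex.exp (θ * Complex.I)) →
        ∀ j k : Fin n, j < k → (ρ * ω (σ j)).re < (ρ * ω (σ k)).re :=
  roots_of_unity_ordering_on_sector_general n ω hinj hroot κ
end

section
/- Let V, Ṽ, V̂ be bounded operators on a Banach space with V̂ = V − Ṽ, and suppose z = z⁰ + Vz and z̃ = z⁰ + Ṽz̃. If ‖Ṽ²‖ ≤ 1/2, then ẑ := z − z̃ satisfies ẑ = V̂ z⁰ + V̂ V z⁰ + V̂ V² z + ∑_{ν≥0} Ṽ^{2ν}(Ṽ V̂ z + Ṽ² V̂ z), and hence ‖ẑ − V̂ z⁰‖ ≤ ‖V̂ V z⁰‖ + ‖V̂ V²‖·‖z‖ + 2(‖Ṽ V̂‖ + ‖Ṽ² V̂‖)‖z‖(1 + ‖Ṽ‖). -/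
/-- Difference of two fixed points via a Neumann series: if `z = z⁰ + Vz`,
`z̃ = z⁰ + Ṽz̃`, `V̂ = V − Ṽ`, and `‖Ṽ²‖ ≤ 1/2`, then `ẑ = z − z̃` satisfies
`ẑ = V̂z⁰ + V̂Vz⁰ + V̂V²z + ∑_{ν≥0} Ṽ^{2ν}(ṼV̂z + Ṽ²V̂z)`, whence
`‖ẑ − V̂z⁰‖ ≤ ‖V̂Vz⁰‖ + ‖V̂V²‖‖z‖ + 2(‖ṼV̂‖ + ‖Ṽ²V̂‖)‖z‖(1 + ‖Ṽ‖)`. -/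
theorem difference_of_fixed_points
    {X : Type*} [NormedAddCommGroup X] [NormedSpace ℂ X] [CompleteSpace X]
    (V Vt Vh : X →L[ℂ] X) (hVh : Vh = V - Vt)
    (z zt z0 : X) (hz : z = z0 + V z) (hzt : zt = z0 + Vt zt)
    (hVt2 : ‖Vt ^ 2‖ ≤ 1 / 2) :
    HasSum (fun ν : ℕ => (Vt ^ (2 * ν)) (Vt (Vh z) + (Vt ^ 2) (Vh z)))
      ((z - zt) - Vh z0 - Vh (V z0) - Vh ((V ^ 2) z)) ∧
    ‖(z - zt) - Vh z0‖ ≤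
      ‖Vh (V z0)‖ + ‖Vh * V ^ 2‖ * ‖z‖ +
        2 * (‖Vt * Vh‖ + ‖Vt ^ 2 * Vh‖) * ‖z‖ * (1 + ‖Vt‖) := by
  have hA : ‖Vt ^ 2‖ < 1 := lt_of_le_of_lt hVt2 (by norm_num)
  have hsq : ∀ x : X, Vt (Vt x) = (Vt ^ 2) x := by
    intro x; rw [sq, ContinuousLinearMap.mul_apply]
  -- recursion for z - zt
  have hzh : z - zt = Vh z + Vt (z - zt) := by
    conv_lhs => rw [hz, hzt]
    simp only [hVh, ContinuousLinearMap.sub_apply, map_sub]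
    abel
  have key : (z - zt) - Vh z = Vt (z - zt) := sub_eq_iff_eq_add'.mpr hzh
  have h1 : Vt (z - zt) = Vt (Vh z) + Vt (Vt (z - zt)) := by
    have := congrArg (⇑Vt) hzh; rwa [map_add] at this
  have h2 : Vt (Vt (z - zt)) = (Vt ^ 2) (Vh z) + (Vt ^ 2) (Vt (z - zt)) := by
    have := congrArg (⇑Vt) h1; rw [map_add] at this
    rw [this, hsq, hsq]
  -- fixed point equation
  have hsfix : Vt (z - zt)
      = (Vt (Vh z) + (Vt ^ 2) (Vh z)) + (Vt ^ 2) (Vt (z - zt)) := by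
    calc Vt (z - zt) = Vt (Vh z) + Vt (Vt (z - zt)) := h1
      _ = Vt (Vh z) + ((Vt ^ 2) (Vh z) + (Vt ^ 2) (Vt (z - zt))) := by rw [h2]
      _ = _ := by abel
  -- decomposition of Vh z
  have hVz : V z = V z0 + V (V z) := by
    have := congrArg (⇑V) hz; rwa [map_add] at this
  have hVhz : Vh z = Vh z0 + Vh (V z0) + Vh ((V ^ 2) z) := by
    have e : (V ^ 2) z = V (V z) := by rw [sq, ContinuousLinearMap.mul_apply]
    have a1 : Vh z = Vh z0 + Vh (V z) := by
      have := congrArg (⇑Vh) hz; rwa [map_add] at this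
    have a2 : Vh (V z) = Vh (V z0) + Vh (V (V z)) := by
      have := congrArg (⇑Vh) hVz; rwa [map_add] at this
    rw [a1, a2, e, add_assoc]
  -- geometric series
  have hunit : IsUnit (1 - Vt ^ 2) := isUnit_one_sub_of_norm_lt_one hA
  have hgs : HasSum (fun ν : ℕ => (Vt ^ 2) ^ ν) (Ring.inverse (1 - Vt ^ 2)) :=
    hasSum_geom_series_inverse _ hA
  have hone : ((1 : X →L[ℂ] X) - Vt ^ 2) (Vt (z - zt)) = Vt (Vh z) + (Vt ^ 2) (Vh z) := by
    rw [ContinuousLinearMap.sub_apply, ContinuousLinearMap.one_apply]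
    exact sub_eq_of_eq_add hsfix
  have hTs : (Ring.inverse ((1 : X →L[ℂ] X) - Vt ^ 2)) (Vt (Vh z) + (Vt ^ 2) (Vh z))
      = Vt (z - zt) := by
    rw [← hone, ← ContinuousLinearMap.mul_apply, Ring.inverse_mul_cancel _ hunit,
      ContinuousLinearMap.one_apply]
  have hsum : HasSum (fun ν : ℕ => ((Vt ^ 2) ^ ν) (Vt (Vh z) + (Vt ^ 2) (Vh z)))
      (Vt (z - zt)) := by
    have := (ContinuousLinearMap.apply ℂ X (Vt (Vh z) + (Vt ^ 2) (Vh z))).hasSum hgs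
    simpa only [ContinuousLinearMap.apply_apply, hTs] using this
  have hval : (z - zt) - Vh z0 - Vh (V z0) - Vh ((V ^ 2) z) = Vt (z - zt) := by
    rw [← key, hVhz]; abel
  constructor
  · have hfun : (fun ν : ℕ => (Vt ^ (2 * ν)) (Vt (Vh z) + (Vt ^ 2) (Vh z)))
        = fun ν : ℕ => ((Vt ^ 2) ^ ν) (Vt (Vh z) + (Vt ^ 2) (Vh z)) := by
      funext ν; rw [pow_mul]
    rw [hfun, hval]; exact hsum
  -- norm estimate
  · have hs2 : ‖Vt (z - zt)‖ ≤ 2 * ‖Vt (Vh z) + (Vt ^ 2) (Vh z)‖ := by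
      have ha : ‖Vt (z - zt)‖
          ≤ ‖Vt (Vh z) + (Vt ^ 2) (Vh z)‖ + ‖(Vt ^ 2) (Vt (z - zt))‖ := by
        conv_lhs => rw [hsfix]
        exact norm_add_le _ _
      have hb : ‖(Vt ^ 2) (Vt (z - zt))‖ ≤ (1 / 2) * ‖Vt (z - zt)‖ :=
        ((Vt ^ 2).le_opNorm _).trans
          (mul_le_mul_of_nonneg_right hVt2 (norm_nonneg _))
      linarith
    have hw : ‖Vt (Vh z) + (Vt ^ 2) (Vh z)‖ ≤ (‖Vt * Vh‖ + ‖Vt ^ 2 * Vh‖) * ‖z‖ := by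
      have e1 : Vt (Vh z) = (Vt * Vh) z := rfl
      have e2 : (Vt ^ 2) (Vh z) = (Vt ^ 2 * Vh) z := rfl
      calc ‖Vt (Vh z) + (Vt ^ 2) (Vh z)‖
          ≤ ‖Vt (Vh z)‖ + ‖(Vt ^ 2) (Vh z)‖ := norm_add_le _ _
        _ ≤ ‖Vt * Vh‖ * ‖z‖ + ‖Vt ^ 2 * Vh‖ * ‖z‖ := by
            rw [e1, e2]
            exact add_le_add ((Vt * Vh).le_opNorm z) ((Vt ^ 2 * Vh).le_opNorm z)
        _ = (‖Vt * Vh‖ + ‖Vt ^ 2 * Vh‖) * ‖z‖ := by ring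
    have hdecomp : (z - zt) - Vh z0
        = Vh (V z0) + Vh ((V ^ 2) z) + Vt (z - zt) := by
      have e : (z - zt) - Vh z0 = ((z - zt) - Vh z) + (Vh z - Vh z0) := by abel
      rw [e, key, hVhz]; abel
    have hVh2 : ‖Vh ((V ^ 2) z)‖ ≤ ‖Vh * V ^ 2‖ * ‖z‖ := (Vh * V ^ 2).le_opNorm z
    have h0 : (0:ℝ) ≤ ‖Vt * Vh‖ + ‖Vt ^ 2 * Vh‖ :=
      add_nonneg (norm_nonneg _) (norm_nonneg _)
    have h1' : ‖(z - zt) - Vh z0‖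
        ≤ ‖Vh (V z0)‖ + ‖Vh ((V ^ 2) z)‖ + ‖Vt (z - zt)‖ := by
      rw [hdecomp]
      exact (norm_add_le _ _).trans (by gcongr; exact norm_add_le _ _)
    nlinarith [norm_nonneg z, norm_nonneg Vt, norm_nonneg (Vt (z - zt)),
      norm_nonneg (Vt (Vh z) + (Vt ^ 2) (Vh z)), mul_nonneg h0 (norm_nonneg z)]
end

section
/- Let ρ_l = μ l + z_l (l ≥ 1) with μ > 0 real and {z_l} a bounded sequence of complex numbers, and let a ∈ L²(0,1). Then the sequence ε_l = ∫₀¹ a(t) e^{i μ l t} e^{i z_l t} dt satisfies ∑_l |ε_l|² ≤ C(μ, sup|z_l|) ‖a‖²_{L²}. -/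
open MeasureTheory intervalIntegral

open scoped Real ENNReal


lemma tsum_cs (u v : ℕ → ℝ) (hu : ∀ k, 0 ≤ u k) (hv : ∀ k, 0 ≤ v k)
    (hus : Summable u) (huv2 : Summable (fun k => u k * v k ^ 2)) :
    (∑' k, u k * v k) ^ 2 ≤ (∑' k, u k) * ∑' k, u k * v k ^ 2 := by
  have hR0 : 0 ≤ (∑' k, u k) * ∑' k, u k * v k ^ 2 :=
    mul_nonneg (tsum_nonneg hu) (tsum_nonneg fun k => mul_nonneg (hu k) (sq_nonneg _))
  have huv : Summable (fun k => u k * v k) := by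
    refine Summable.of_nonneg_of_le (fun k => mul_nonneg (hu k) (hv k)) (fun k => ?_)
      (((hus.add huv2).mul_left (1/2 : ℝ)))
    have h2 : 2 * v k ≤ 1 + v k ^ 2 := by nlinarith [sq_nonneg (v k - 1)]
    have := hu k
    nlinarith
  have key : ∀ s : Finset ℕ, ∑ k ∈ s, u k * v k ≤
      Real.sqrt ((∑' k, u k) * ∑' k, u k * v k ^ 2) := by
    intro s
    have h1 : (∑ k ∈ s, u k * v k) ^ 2 ≤ (∑ k ∈ s, u k) * ∑ k ∈ s, u k * v k ^ 2 := by
      have hcs := Finset.sum_mul_sq_le_sq_mul_sq s (fun k => Real.sqrt (u k))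
        (fun k => Real.sqrt (u k) * v k)
      calc (∑ k ∈ s, u k * v k) ^ 2
          = (∑ k ∈ s, Real.sqrt (u k) * (Real.sqrt (u k) * v k)) ^ 2 := by
            congr 1; refine Finset.sum_congr rfl fun k _ => ?_
            rw [← mul_assoc, Real.mul_self_sqrt (hu k)]
        _ ≤ (∑ k ∈ s, Real.sqrt (u k) ^ 2) * ∑ k ∈ s, (Real.sqrt (u k) * v k) ^ 2 := hcs
        _ = (∑ k ∈ s, u k) * ∑ k ∈ s, u k * v k ^ 2 := by
            congr 1
            · exact Finset.sum_congr rfl fun k _ => Real.sq_sqrt (hu k)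
            · refine Finset.sum_congr rfl fun k _ => ?_
              rw [mul_pow, Real.sq_sqrt (hu k)]
    have h2 : (∑ k ∈ s, u k) * ∑ k ∈ s, u k * v k ^ 2 ≤
        (∑' k, u k) * ∑' k, u k * v k ^ 2 := by
      refine mul_le_mul (Summable.sum_le_tsum s (fun k _ => hu k) hus)
        (Summable.sum_le_tsum s (fun k _ => mul_nonneg (hu k) (sq_nonneg _)) huv2)
        (Finset.sum_nonneg fun k _ => mul_nonneg (hu k) (sq_nonneg _))
        (tsum_nonneg hu)
    have hs0 : 0 ≤ ∑ k ∈ s, u k * v k := Finset.sum_nonneg fun k _ => mul_nonneg (hu k) (hv k)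
    exact (Real.le_sqrt hs0 hR0).2 (le_trans h1 h2)
  have hts : (∑' k, u k * v k) ≤ Real.sqrt ((∑' k, u k) * ∑' k, u k * v k ^ 2) :=
    Summable.tsum_le_of_sum_le huv key
  calc (∑' k, u k * v k) ^ 2 ≤ Real.sqrt ((∑' k, u k) * ∑' k, u k * v k ^ 2) ^ 2 :=
        pow_le_pow_left₀ (tsum_nonneg fun k => mul_nonneg (hu k) (hv k)) hts 2
    _ = _ := Real.sq_sqrt hR0

lemma bessel_aux (μ T : ℝ) (N : ℕ) (hN : 0 < N) (hμ : 0 < μ) (hT : T = 2 * π * N / μ)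
    (hT1 : 1 ≤ T) (c : ℝ → ℂ) (hc : StronglyMeasurable c)
    (hci : IntegrableOn (fun t => ‖c t‖ ^ 2) (Set.Ioo 0 1)) :
    Summable (fun l : ℕ =>
      ‖∫ t in Set.Ioo (0:ℝ) 1, c t * Complex.exp (Complex.I * μ * l * t)‖ ^ 2) ∧
    ∑' l : ℕ, ‖∫ t in Set.Ioo (0:ℝ) 1, c t * Complex.exp (Complex.I * μ * l * t)‖ ^ 2
      ≤ T * ∫ t in Set.Ioo (0:ℝ) 1, ‖c t‖ ^ 2 := by
  have hT0 : 0 < T := lt_of_lt_of_le one_pos hT1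
  haveI : Fact (0 < T) := ⟨hT0⟩
  set g : ℝ → ℂ := (Set.Ioo (0:ℝ) 1).indicator c with hgdef
  have hgm : StronglyMeasurable g := hc.indicator measurableSet_Ioo
  set F : AddCircle T → ℂ := AddCircle.liftIoc T 0 g with hFdef
  have hFm : StronglyMeasurable F := by
    have : F = (g ∘ (Subtype.val : Set.Ioc (0:ℝ) (0+T) → ℝ)) ∘
        (AddCircle.measurableEquivIoc T 0) := rfl
    rw [this]
    exact (hgm.comp_measurable measurable_subtype_coe).comp_measurable
      (AddCircle.measurableEquivIoc T 0).measurable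
  have hIoo_sub : Set.Ioo (0:ℝ) 1 ⊆ Set.Ioc 0 (0 + T) := by
    intro x hx; exact ⟨hx.1, by rw [zero_add]; exact le_trans hx.2.le hT1⟩
  -- square norm of F as function on Ioc
  have hFg : ∀ x ∈ Set.Ioc (0:ℝ) (0 + T), F ↑x = g x := fun x hx =>
    AddCircle.liftIoc_coe_apply hx
  -- Integrability of ‖F‖² over the circle
  have hgsq : (fun x : ℝ => ‖g x‖ ^ 2) =
      (Set.Ioo (0:ℝ) 1).indicator (fun x => ‖c x‖ ^ 2) := by
    funext x
    by_cases hx : x ∈ Set.Ioo (0:ℝ) 1 <;>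
      simp [hgdef, Set.indicator_of_mem, Set.indicator_of_notMem, hx]
  have hgint : IntegrableOn (fun x => ‖g x‖ ^ 2) (Set.Ioc 0 (0 + T)) := by
    rw [hgsq]
    rw [IntegrableOn, integrable_indicator_iff measurableSet_Ioo]
    exact hci.restrict
  have hFsm : AEStronglyMeasurable (fun x : AddCircle T => ‖F x‖ ^ 2) volume :=
    (hFm.measurable.norm.pow_const 2).aestronglyMeasurable
  have hFint : Integrable (fun x : AddCircle T => ‖F x‖ ^ 2) volume := by
    rw [← (AddCircle.measurePreserving_mk T 0).integrable_comp hFsm]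
    refine (hgint.congr_fun ?_ measurableSet_Ioc)
    intro x hx
    simp only [Function.comp_apply, hFg x hx]
  -- volume vs haar
  have hle : (AddCircle.haarAddCircle : Measure (AddCircle T)) ≤ volume := by
    intro s
    rw [AddCircle.volume_eq_smul_haarAddCircle, Measure.smul_apply, smul_eq_mul]
    exact le_mul_of_one_le_left zero_le (ENNReal.one_le_ofReal.2 hT1)
  have hmem : MemLp F 2 AddCircle.haarAddCircle := by
    have hv : MemLp F 2 (volume : Measure (AddCircle T)) :=
      (memLp_two_iff_integrable_sq_norm hFm.aestronglyMeasurable).2 hFint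
    exact hv.mono_measure hle
  set FL : Lp ℂ 2 (AddCircle.haarAddCircle) := hmem.toLp F with hFL
  have hcoeff : ∀ n : ℤ, fourierCoeff (FL : AddCircle T → ℂ) n = fourierCoeff F n := by
    intro n
    apply MeasureTheory.integral_congr_ae
    filter_upwards [hmem.coeFn_toLp] with x hx
    rw [hx]
  -- Parseval
  have hpars := tsum_sq_fourierCoeff FL
  -- compute RHS of Parseval
  have hIvol : ∫ x : AddCircle T, ‖F x‖ ^ 2 =
      ∫ t in Set.Ioo (0:ℝ) 1, ‖c t‖ ^ 2 := by
    rw [← AddCircle.integral_preimage T 0 (fun b : AddCircle T => ‖F b‖ ^ 2)]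
    rw [setIntegral_congr_fun measurableSet_Ioc
      (fun x hx => by simp only [hFg x hx] : ∀ x ∈ Set.Ioc (0:ℝ) (0+T), ‖F ↑x‖ ^ 2 = ‖g x‖ ^ 2)]
    rw [hgsq, MeasureTheory.integral_indicator measurableSet_Ioo,
      Measure.restrict_restrict measurableSet_Ioo,
      Set.inter_eq_self_of_subset_left hIoo_sub]
  have hIhaar : ∫ x : AddCircle T, ‖(FL : AddCircle T → ℂ) x‖ ^ 2 ∂AddCircle.haarAddCircle
      = (1/T) * ∫ t in Set.Ioo (0:ℝ) 1, ‖c t‖ ^ 2 := by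
    have h1 : ∫ x : AddCircle T, ‖(FL : AddCircle T → ℂ) x‖ ^ 2 ∂AddCircle.haarAddCircle
        = ∫ x : AddCircle T, ‖F x‖ ^ 2 ∂AddCircle.haarAddCircle := by
      apply MeasureTheory.integral_congr_ae
      filter_upwards [hmem.coeFn_toLp] with x hx
      rw [hx]
    have h2 : ∫ x : AddCircle T, ‖F x‖ ^ 2 ∂(volume : Measure (AddCircle T))
        = T * ∫ x : AddCircle T, ‖F x‖ ^ 2 ∂AddCircle.haarAddCircle := by
      rw [AddCircle.volume_eq_smul_haarAddCircle, MeasureTheory.integral_smul_measure _ _,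
        ENNReal.toReal_ofReal hT0.le, smul_eq_mul]
    rw [hIvol] at h2
    rw [h1, h2, one_div, inv_mul_cancel_left₀ hT0.ne']
  -- the coefficients
  set e : ℕ → ℤ := fun l => -((N : ℤ) * l) with he
  have heinj : Function.Injective e := by
    intro x y hxy
    simp only [he, neg_inj] at hxy
    have := mul_left_cancel₀ (by exact_mod_cast hN.ne' : (N:ℤ) ≠ 0) hxy
    exact_mod_cast this
  have hfour : ∀ (l : ℕ) (x : ℝ), (fourier (-(e l)) (x : AddCircle T) : ℂ)
      = Complex.exp (Complex.I * μ * l * x) := by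
    intro l x
    rw [fourier_coe_apply]
    congr 1
    have hTc : (T : ℂ) = 2 * (π:ℝ) * N / μ := by
      rw [hT]; push_cast; ring
    have hTc0 : (T : ℂ) ≠ 0 := Complex.ofReal_ne_zero.2 hT0.ne'
    have hμ0 : (μ : ℂ) ≠ 0 := Complex.ofReal_ne_zero.2 hμ.ne'
    have hπ0 : (π : ℂ) ≠ 0 := Complex.ofReal_ne_zero.2 Real.pi_ne_zero
    have hN0 : (N : ℂ) ≠ 0 := Nat.cast_ne_zero.2 hN.ne'
    rw [hTc] at hTc0 ⊢
    push_cast [he]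
    field_simp
  have hdl : ∀ l : ℕ, (∫ t in Set.Ioo (0:ℝ) 1, c t * Complex.exp (Complex.I * μ * l * t))
      = T • fourierCoeff F (e l) := by
    intro l
    rw [fourierCoeff_eq_intervalIntegral F (e l) 0, smul_smul]
    have hTT : T * (1 / T) = 1 := by field_simp
    rw [hTT, one_smul]
    rw [intervalIntegral.integral_of_le (by linarith : (0:ℝ) ≤ 0 + T)]
    rw [MeasureTheory.setIntegral_congr_fun measurableSet_Ioc
      (fun x hx => by simp only [hFg x hx] :
        Set.EqOn (fun x : ℝ => (fourier (-(e l)) (x : AddCircle T) : ℂ) • F ↑x)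
          (fun x : ℝ => (fourier (-(e l)) (x : AddCircle T) : ℂ) • g x) (Set.Ioc 0 (0+T)))]
    have : ∀ x : ℝ, (fourier (-(e l)) (x : AddCircle T) : ℂ) • g x
        = (Set.Ioo (0:ℝ) 1).indicator (fun t => c t * Complex.exp (Complex.I * μ * l * t)) x := by
      intro x
      by_cases hx : x ∈ Set.Ioo (0:ℝ) 1
      · rw [Set.indicator_of_mem hx, hgdef, Set.indicator_of_mem hx, smul_eq_mul, hfour l x,
          mul_comm]
      · rw [Set.indicator_of_notMem hx, hgdef, Set.indicator_of_notMem hx, smul_zero]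
    simp_rw [this]
    rw [MeasureTheory.integral_indicator measurableSet_Ioo,
      Measure.restrict_restrict measurableSet_Ioo,
      Set.inter_eq_self_of_subset_left hIoo_sub]
  -- summability of full Parseval family
  have hsq : Summable (fun i : ℤ => ‖fourierCoeff (FL : AddCircle T → ℂ) i‖ ^ 2) := by
    have h1 : Memℓp (fun i => fourierBasis.repr FL i) 2 := (fourierBasis.repr FL).property
    have h2 := (memℓp_gen_iff (p := 2) (by norm_num) (f := fun i => fourierBasis.repr FL i)).mp h1
    have h3 : ∀ i : ℤ, ‖fourierBasis.repr FL i‖ ^ (2:ℝ≥0∞).toReal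
        = ‖fourierCoeff (FL : AddCircle T → ℂ) i‖ ^ 2 := by
      intro i
      rw [fourierBasis_repr]
      norm_num
    exact (summable_congr h3).mp h2
  have hnormdl : ∀ l : ℕ,
      ‖∫ t in Set.Ioo (0:ℝ) 1, c t * Complex.exp (Complex.I * μ * l * t)‖ ^ 2
      = T^2 * ‖fourierCoeff (FL : AddCircle T → ℂ) (e l)‖ ^ 2 := by
    intro l
    rw [hdl l, hcoeff (e l), norm_smul, Real.norm_eq_abs, abs_of_pos hT0, mul_pow]
  have hsub : Summable (fun l : ℕ => ‖fourierCoeff (FL : AddCircle T → ℂ) (e l)‖ ^ 2) :=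
    hsq.comp_injective heinj
  constructor
  · rw [summable_congr hnormdl]
    exact hsub.mul_left _
  · calc ∑' l : ℕ, ‖∫ t in Set.Ioo (0:ℝ) 1, c t * Complex.exp (Complex.I * μ * l * t)‖ ^ 2
        = T^2 * ∑' l : ℕ, ‖fourierCoeff (FL : AddCircle T → ℂ) (e l)‖ ^ 2 := by
          rw [tsum_congr hnormdl, tsum_mul_left]
      _ ≤ T^2 * ∑' i : ℤ, ‖fourierCoeff (FL : AddCircle T → ℂ) i‖ ^ 2 := by
          refine mul_le_mul_of_nonneg_left ?_ (sq_nonneg T)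
          exact Summable.tsum_le_tsum_of_inj e heinj (fun i _ => sq_nonneg _) (fun l => le_rfl) hsub hsq
      _ = T^2 * ((1/T) * ∫ t in Set.Ioo (0:ℝ) 1, ‖c t‖ ^ 2) := by rw [hpars, hIhaar]
      _ = T * ∫ t in Set.Ioo (0:ℝ) 1, ‖c t‖ ^ 2 := by field_simp


/-- ℓ²-summability of Fourier-type remainders along a perturbed arithmetic sequence:
for `μ > 0` and a uniform bound `Z` on the perturbations `z_l`, there is a constant
`C = C(μ, Z)` such that for every `a ∈ L²(0,1)` and every sequence `z` with
`‖z_l‖ ≤ Z`, the numbers `ε_l = ∫₀¹ a(t) e^{iμlt} e^{i z_l t} dt` satisfy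
`∑_l |ε_l|² ≤ C ‖a‖²_{L²}`. -/
theorem bessel_type_l2_bound (μ : ℝ) (hμ : 0 < μ) (Z : ℝ) (hZ : 0 ≤ Z) :
    ∃ C : ℝ, 0 < C ∧
      ∀ (a : ℝ → ℂ) (z : ℕ → ℂ) (ε : ℕ → ℂ),
        MeasureTheory.AEStronglyMeasurable a (MeasureTheory.volume.restrict (Set.Ioo 0 1)) →
        MeasureTheory.IntegrableOn (fun t => ‖a t‖ ^ 2) (Set.Ioo 0 1) →
        (∀ l, ‖z l‖ ≤ Z) →
        (∀ l : ℕ, ε l = ∫ t in (0:ℝ)..1,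
          a t * Complex.exp (Complex.I * μ * l * t) * Complex.exp (Complex.I * z l * t)) →
        Summable (fun l : ℕ => ‖ε l‖ ^ 2) ∧
        (∑' l : ℕ, ‖ε l‖ ^ 2) ≤ C * ∫ t in (0:ℝ)..1, ‖a t‖ ^ 2 := by
  have hπ := Real.pi_pos
  set N : ℕ := ⌈μ / (2 * π)⌉₊ + 1 with hNdef
  have hN : 0 < N := Nat.succ_pos _
  set T : ℝ := 2 * π * N / μ with hTdef
  have hT1 : 1 ≤ T := by
    rw [hTdef, le_div_iff₀ hμ]
    have h1 : μ / (2 * π) ≤ N := by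
      calc μ / (2 * π) ≤ ⌈μ / (2 * π)⌉₊ := Nat.le_ceil _
        _ ≤ N := by exact_mod_cast Nat.le_succ _
    calc 1 * μ = (μ / (2 * π)) * (2 * π) := by field_simp
      _ ≤ N * (2 * π) := mul_le_mul_of_nonneg_right h1 (by positivity)
      _ = 2 * π * N := by ring
  have hT0 : 0 < T := lt_of_lt_of_le one_pos hT1
  set w : ℕ → ℝ := fun k => Z ^ k / k.factorial with hwdef
  have hw0 : ∀ k, 0 ≤ w k := fun k => by positivity
  have hEs : Summable w := Real.summable_pow_div_factorial Z
  set E : ℝ := ∑' k, w k with hEdef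
  have hE1 : (1:ℝ) ≤ E := by
    have h := Summable.le_tsum hEs 0 (fun k _ => hw0 k)
    simpa [hwdef] using h
  have hE0 : 0 < E := lt_of_lt_of_le one_pos hE1
  refine ⟨E ^ 2 * T, by positivity, ?_⟩
  intro a z ε ha hai hz hε
  set b : ℝ → ℂ := ha.mk a with hbdef
  have hbm : StronglyMeasurable b := ha.stronglyMeasurable_mk
  have hab : a =ᵐ[volume.restrict (Set.Ioo 0 1)] b := ha.ae_eq_mk
  have hbi : IntegrableOn (fun t => ‖b t‖ ^ 2) (Set.Ioo 0 1) := by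
    refine hai.congr ?_
    filter_upwards [hab] with t ht; rw [ht]
  set Ia : ℝ := ∫ t in Set.Ioo (0:ℝ) 1, ‖b t‖ ^ 2 with hIadef
  have hIa0 : 0 ≤ Ia :=
    MeasureTheory.setIntegral_nonneg measurableSet_Ioo (fun t _ => sq_nonneg _)
  have hIa : ∫ t in (0:ℝ)..1, ‖a t‖ ^ 2 = Ia := by
    rw [intervalIntegral.integral_of_le zero_le_one,
      MeasureTheory.integral_Ioc_eq_integral_Ioo]
    exact MeasureTheory.integral_congr_ae (by filter_upwards [hab] with t ht; rw [ht])
  rw [hIa]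
  haveI hfm : IsFiniteMeasure (volume.restrict (Set.Ioo (0:ℝ) 1)) := ⟨by
    rw [Measure.restrict_apply_univ, Real.volume_Ioo]; norm_num⟩
  have hbL2 : MemLp b 2 (volume.restrict (Set.Ioo (0:ℝ) 1)) :=
    (memLp_two_iff_integrable_sq_norm hbm.aestronglyMeasurable).2 hbi
  have hbint : IntegrableOn b (Set.Ioo 0 1) := hbL2.integrable (by norm_num)
  set d : ℕ → ℕ → ℂ := fun k l =>
    ∫ t in Set.Ioo (0:ℝ) 1, (b t * (t:ℂ) ^ k) * Complex.exp (Complex.I * μ * l * t) with hddef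
  have hck : ∀ k : ℕ, StronglyMeasurable (fun t : ℝ => b t * (t:ℂ) ^ k) :=
    fun k => hbm.mul ((Complex.measurable_ofReal.pow_const k).stronglyMeasurable)
  have hpt : ∀ (k : ℕ) (t : ℝ), t ∈ Set.Ioo (0:ℝ) 1 → ‖b t * (t:ℂ) ^ k‖ ≤ ‖b t‖ := by
    intro k t ht
    rw [norm_mul]
    have h1 : ‖(t:ℂ) ^ k‖ ≤ 1 := by
      rw [norm_pow, Complex.norm_real, Real.norm_eq_abs, abs_of_pos ht.1]
      exact pow_le_one₀ ht.1.le ht.2.le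
    calc ‖b t‖ * ‖(t:ℂ) ^ k‖ ≤ ‖b t‖ * 1 := mul_le_mul_of_nonneg_left h1 (norm_nonneg _)
      _ = ‖b t‖ := mul_one _
  have hcksq : ∀ k : ℕ, IntegrableOn (fun t => ‖b t * (t:ℂ) ^ k‖ ^ 2) (Set.Ioo 0 1) := by
    intro k
    refine hbi.mono' ((hck k).measurable.norm.pow_const 2).aestronglyMeasurable ?_
    rw [ae_restrict_iff' measurableSet_Ioo]
    refine ae_of_all _ fun t ht => ?_
    rw [Real.norm_eq_abs, abs_of_nonneg (sq_nonneg _)]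
    exact pow_le_pow_left₀ (norm_nonneg _) (hpt k t ht) 2
  have hcksqle : ∀ k : ℕ, ∫ t in Set.Ioo (0:ℝ) 1, ‖b t * (t:ℂ) ^ k‖ ^ 2 ≤ Ia := by
    intro k
    exact MeasureTheory.setIntegral_mono_on (hcksq k) hbi measurableSet_Ioo
      (fun t ht => pow_le_pow_left₀ (norm_nonneg _) (hpt k t ht) 2)
  have hBk : ∀ k : ℕ, Summable (fun l : ℕ => ‖d k l‖ ^ 2) ∧
      ∑' l : ℕ, ‖d k l‖ ^ 2 ≤ T * Ia := by
    intro k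
    obtain ⟨h1, h2⟩ := bessel_aux μ T N hN hμ hTdef hT1 (fun t => b t * (t:ℂ) ^ k)
      (hck k) (hcksq k)
    exact ⟨h1, le_trans h2 (mul_le_mul_of_nonneg_left (hcksqle k) hT0.le)⟩
  set A : ℝ := ∫ t in Set.Ioo (0:ℝ) 1, ‖b t‖ with hAdef
  have hA0 : 0 ≤ A :=
    MeasureTheory.setIntegral_nonneg measurableSet_Ioo (fun t _ => norm_nonneg _)
  have hexpnorm : ∀ (l : ℕ) (t : ℝ), ‖Complex.exp (Complex.I * μ * l * t)‖ = 1 := by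
    intro l t
    have harg : Complex.I * μ * l * t = ((μ * l * t : ℝ) : ℂ) * Complex.I := by
      push_cast; ring
    rw [harg, Complex.norm_exp_ofReal_mul_I]
  have hexpm : ∀ l : ℕ, StronglyMeasurable (fun t : ℝ => Complex.exp (Complex.I * μ * l * t)) :=
    fun l => (Complex.measurable_exp.comp
      (Complex.measurable_ofReal.const_mul (Complex.I * μ * l))).stronglyMeasurable
  have hdA : ∀ (k l : ℕ), ‖d k l‖ ≤ A := by
    intro k l
    refine le_trans (MeasureTheory.norm_integral_le_integral_norm _) ?_
    refine MeasureTheory.setIntegral_mono_on ?_ hbint.norm measurableSet_Ioo ?_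
    · refine hbint.norm.mono' ((hck k).mul (hexpm l)).norm.aestronglyMeasurable ?_
      rw [ae_restrict_iff' measurableSet_Ioo]
      refine ae_of_all _ fun t ht => ?_
      rw [norm_norm, norm_mul, hexpnorm l t, mul_one]
      exact hpt k t ht
    · intro t ht
      rw [norm_mul, hexpnorm l t, mul_one]
      exact hpt k t ht
  -- series expansion of ε
  have hexp : ∀ l : ℕ, ε l = ∑' k : ℕ,
      ((Complex.I * z l) ^ k / (k.factorial : ℂ)) * d k l := by
    intro l
    rw [hε l, intervalIntegral.integral_of_le zero_le_one,
      MeasureTheory.integral_Ioc_eq_integral_Ioo]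
    have hstep1 : ∫ t in Set.Ioo (0:ℝ) 1,
        a t * Complex.exp (Complex.I * μ * l * t) * Complex.exp (Complex.I * z l * t)
        = ∫ t in Set.Ioo (0:ℝ) 1,
        b t * Complex.exp (Complex.I * μ * l * t) * Complex.exp (Complex.I * z l * t) :=
      MeasureTheory.integral_congr_ae (by filter_upwards [hab] with t ht; rw [ht])
    rw [hstep1]
    have hexpand : (fun t : ℝ =>
        b t * Complex.exp (Complex.I * μ * l * t) * Complex.exp (Complex.I * z l * t))
        = fun t : ℝ => ∑' k : ℕ, b t * Complex.exp (Complex.I * μ * l * t) *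
            ((Complex.I * z l * t) ^ k / (k.factorial : ℂ)) := by
      funext t
      rw [tsum_mul_left]
      congr 1
      rw [Complex.exp_eq_exp_ℂ, NormedSpace.exp_eq_tsum_div]
    rw [hexpand]
    have hmeask : ∀ k : ℕ, AEStronglyMeasurable
        (fun t : ℝ => b t * Complex.exp (Complex.I * μ * l * t) *
          ((Complex.I * z l * t) ^ k / (k.factorial : ℂ)))
        (volume.restrict (Set.Ioo (0:ℝ) 1)) := by
      intro k
      exact ((hbm.mul (hexpm l)).mul
        ((((Complex.measurable_ofReal.const_mul (Complex.I * z l)).pow_const k).div_const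
          _).stronglyMeasurable)).aestronglyMeasurable
    have hblint : ∫⁻ t in Set.Ioo (0:ℝ) 1, (‖b t‖₊ : ℝ≥0∞) ≠ ⊤ := hbint.2.ne
    have hlint : ∑' k : ℕ, ∫⁻ t in Set.Ioo (0:ℝ) 1,
        ‖b t * Complex.exp (Complex.I * μ * l * t) *
          ((Complex.I * z l * t) ^ k / (k.factorial : ℂ))‖₊ ∂volume ≠ ⊤ := by
      have hterm : ∀ k : ℕ, ∫⁻ t in Set.Ioo (0:ℝ) 1,
          ‖b t * Complex.exp (Complex.I * μ * l * t) *
            ((Complex.I * z l * t) ^ k / (k.factorial : ℂ))‖₊ ∂volume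
          ≤ ENNReal.ofReal (w k) * ∫⁻ t in Set.Ioo (0:ℝ) 1, (‖b t‖₊ : ℝ≥0∞) := by
        intro k
        rw [← MeasureTheory.lintegral_const_mul' _ _ ENNReal.ofReal_ne_top]
        refine MeasureTheory.lintegral_mono_ae ?_
        rw [ae_restrict_iff' measurableSet_Ioo]
        refine ae_of_all _ fun t ht => ?_
        have hnorm : ‖b t * Complex.exp (Complex.I * μ * l * t) *
            ((Complex.I * z l * t) ^ k / (k.factorial : ℂ))‖ ≤ w k * ‖b t‖ := by
          rw [norm_mul, norm_mul, hexpnorm l t, mul_one, norm_div, norm_pow]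
          have h1 : ‖Complex.I * z l * t‖ ≤ Z := by
            rw [norm_mul, norm_mul, Complex.norm_I, one_mul, Complex.norm_real,
              Real.norm_eq_abs, abs_of_pos ht.1]
            calc ‖z l‖ * t ≤ Z * 1 :=
              mul_le_mul (hz l) ht.2.le ht.1.le hZ
              _ = Z := mul_one _
          have h2 : ‖(k.factorial : ℂ)‖ = (k.factorial : ℝ) := by
            rw [Complex.norm_natCast]
          rw [h2, hwdef]
          have h3 : ‖Complex.I * z l * t‖ ^ k ≤ Z ^ k :=
            pow_le_pow_left₀ (norm_nonneg _) h1 k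
          have h4 : (0:ℝ) < k.factorial := by exact_mod_cast k.factorial_pos
          have h5 : ‖b t‖ * (‖Complex.I * z l * ↑t‖ ^ k / ↑k.factorial)
              = ‖b t‖ * ‖Complex.I * z l * ↑t‖ ^ k / ↑k.factorial := by ring
          have h6 : Z ^ k / (k.factorial:ℝ) * ‖b t‖
              = ‖b t‖ * Z ^ k / ↑k.factorial := by ring
          rw [h5, h6]
          exact (div_le_div_iff_of_pos_right h4).2 (mul_le_mul_of_nonneg_left h3 (norm_nonneg _))
        calc (‖b t * Complex.exp (Complex.I * μ * l * t) *
            ((Complex.I * z l * t) ^ k / (k.factorial : ℂ))‖₊ : ℝ≥0∞)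
            ≤ ENNReal.ofReal (w k * ‖b t‖) := by
              rw [← ENNReal.ofReal_coe_nnreal, coe_nnnorm]
              exact ENNReal.ofReal_le_ofReal hnorm
          _ = ENNReal.ofReal (w k) * (‖b t‖₊ : ℝ≥0∞) := by
              rw [ENNReal.ofReal_mul (hw0 k), ← ENNReal.ofReal_coe_nnreal, coe_nnnorm]
      refine ne_top_of_le_ne_top ?_ (ENNReal.tsum_le_tsum hterm)
      rw [ENNReal.tsum_mul_right, ← ENNReal.ofReal_tsum_of_nonneg hw0 hEs]
      exact ENNReal.mul_ne_top ENNReal.ofReal_ne_top hblint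
    rw [MeasureTheory.integral_tsum hmeask hlint]
    refine tsum_congr fun k => ?_
    have hre : (fun t : ℝ => b t * Complex.exp (Complex.I * μ * l * t) *
        ((Complex.I * z l * t) ^ k / (k.factorial : ℂ)))
        = fun t : ℝ => ((Complex.I * z l) ^ k / (k.factorial : ℂ)) *
          ((b t * (t:ℂ) ^ k) * Complex.exp (Complex.I * μ * l * t)) := by
      funext t
      rw [mul_pow]
      ring
    rw [hre, MeasureTheory.integral_const_mul]
  -- per-l bounds
  have hsumd : ∀ l : ℕ, Summable (fun k => w k * ‖d k l‖) := by
    intro l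
    refine Summable.of_nonneg_of_le (fun k => mul_nonneg (hw0 k) (norm_nonneg _))
      (fun k => mul_le_mul_of_nonneg_left (hdA k l) (hw0 k)) (hEs.mul_right A)
  have hsumd2 : ∀ l : ℕ, Summable (fun k => w k * ‖d k l‖ ^ 2) := by
    intro l
    refine Summable.of_nonneg_of_le (fun k => mul_nonneg (hw0 k) (sq_nonneg _))
      (fun k => ?_) (hEs.mul_right (A ^ 2))
    exact mul_le_mul_of_nonneg_left
      (pow_le_pow_left₀ (norm_nonneg _) (hdA k l) 2) (hw0 k)
  have hnl : ∀ l : ℕ, ‖ε l‖ ≤ ∑' k, w k * ‖d k l‖ := by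
    intro l
    rw [hexp l]
    have hterm : ∀ k : ℕ, ‖((Complex.I * z l) ^ k / (k.factorial : ℂ)) * d k l‖
        ≤ w k * ‖d k l‖ := by
      intro k
      rw [norm_mul, norm_div, norm_pow, Complex.norm_natCast]
      refine mul_le_mul_of_nonneg_right ?_ (norm_nonneg _)
      have h1 : ‖Complex.I * z l‖ ≤ Z := by
        rw [norm_mul, Complex.norm_I, one_mul]; exact hz l
      have h4 : (0:ℝ) < k.factorial := by exact_mod_cast k.factorial_pos
      rw [hwdef]
      exact (div_le_div_iff_of_pos_right h4).2 (pow_le_pow_left₀ (norm_nonneg _) h1 k)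
    have hsnorm : Summable (fun k => ‖((Complex.I * z l) ^ k / (k.factorial : ℂ)) * d k l‖) :=
      Summable.of_nonneg_of_le (fun k => norm_nonneg _) hterm (hsumd l)
    exact le_trans (norm_tsum_le_tsum_norm hsnorm) (Summable.tsum_le_tsum hterm hsnorm (hsumd l))
  have hcsl : ∀ l : ℕ, ‖ε l‖ ^ 2 ≤ E * ∑' k, w k * ‖d k l‖ ^ 2 := by
    intro l
    refine le_trans (pow_le_pow_left₀ (norm_nonneg _) (hnl l) 2) ?_
    exact tsum_cs w (fun k => ‖d k l‖) hw0 (fun k => norm_nonneg _) hEs (hsumd2 l)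
  -- ENNReal assembly
  have key : ∑' l : ℕ, ENNReal.ofReal (‖ε l‖ ^ 2) ≤ ENNReal.ofReal (E ^ 2 * T * Ia) := by
    calc ∑' l : ℕ, ENNReal.ofReal (‖ε l‖ ^ 2)
        ≤ ∑' l : ℕ, ENNReal.ofReal (E * ∑' k, w k * ‖d k l‖ ^ 2) :=
          ENNReal.tsum_le_tsum fun l => ENNReal.ofReal_le_ofReal (hcsl l)
      _ = ∑' l : ℕ, (ENNReal.ofReal E * ∑' k, ENNReal.ofReal (w k * ‖d k l‖ ^ 2)) := by
          refine tsum_congr fun l => ?_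
          rw [ENNReal.ofReal_mul hE0.le, ENNReal.ofReal_tsum_of_nonneg
            (fun k => mul_nonneg (hw0 k) (sq_nonneg _)) (hsumd2 l)]
      _ = ENNReal.ofReal E * ∑' (k : ℕ) (l : ℕ), ENNReal.ofReal (w k * ‖d k l‖ ^ 2) := by
          rw [ENNReal.tsum_mul_left]
          congr 1
          exact ENNReal.tsum_comm
      _ ≤ ENNReal.ofReal E * ∑' k : ℕ, ENNReal.ofReal (w k) * ENNReal.ofReal (T * Ia) := by
          refine mul_le_mul_right (ENNReal.tsum_le_tsum fun k => ?_) _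
          have h1 : ∑' l : ℕ, ENNReal.ofReal (w k * ‖d k l‖ ^ 2)
              = ENNReal.ofReal (w k) * ENNReal.ofReal (∑' l : ℕ, ‖d k l‖ ^ 2) := by
            rw [ENNReal.ofReal_tsum_of_nonneg (fun l => sq_nonneg _) (hBk k).1,
              ← ENNReal.tsum_mul_left]
            refine tsum_congr fun m => ?_
            rw [← ENNReal.ofReal_mul (hw0 k)]
          rw [h1]
          exact mul_le_mul_right (ENNReal.ofReal_le_ofReal (hBk k).2) _
      _ = ENNReal.ofReal E * (ENNReal.ofReal (T * Ia) * ENNReal.ofReal E) := by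
          congr 1
          rw [show (fun k : ℕ => ENNReal.ofReal (w k) * ENNReal.ofReal (T * Ia))
              = fun k : ℕ => ENNReal.ofReal (T * Ia) * ENNReal.ofReal (w k) from
              funext fun k => mul_comm _ _]
          rw [ENNReal.tsum_mul_left, ← ENNReal.ofReal_tsum_of_nonneg hw0 hEs]
      _ = ENNReal.ofReal (E ^ 2 * T * Ia) := by
          rw [← ENNReal.ofReal_mul (mul_nonneg hT0.le hIa0),
            ← ENNReal.ofReal_mul hE0.le]
          congr 1
          ring
  have hfin : ∑' l : ℕ, ENNReal.ofReal (‖ε l‖ ^ 2) ≠ ⊤ :=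
    (lt_of_le_of_lt key ENNReal.ofReal_lt_top).ne
  have hsummable : Summable (fun l : ℕ => ‖ε l‖ ^ 2) := by
    have h := ENNReal.summable_toReal hfin
    refine h.congr fun l => ?_
    rw [ENNReal.toReal_ofReal (sq_nonneg _)]
  refine ⟨hsummable, ?_⟩
  have h2 : ENNReal.ofReal (∑' l : ℕ, ‖ε l‖ ^ 2) ≤ ENNReal.ofReal (E ^ 2 * T * Ia) := by
    rw [ENNReal.ofReal_tsum_of_nonneg (fun l => sq_nonneg _) hsummable]
    exact key
  exact (ENNReal.ofReal_le_ofReal_iff (by positivity)).1 h2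
end
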